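/- arXiv:1508.07788 — 4 statements merged into one kernel-verified Lean document; each statement's English description precedes it below -/
import Mathlib

section
/- If κ is an infinite cardinal of uncountable cofinality and A is a subset of a metric space X whose density is at least κ, then A contains a (topologically) discrete subset of cardinality at least κ. -/
open Cardinal

/-- An `ε`-separated set is topologically discrete. -/
lemma discrete_of_separated {X : Type*} [MetricSpace X] {D : Set X} {ε : ℝ} (hε : 0 < ε)
    (hsep : ∀ x ∈ D, ∀ y ∈ D, x ≠ y → ε ≤ dist x y) : DiscreteTopology D := by
  rw [discreteTopology_subtype_iff]
  intro x hx
  rw [Filter.inf_principal_eq_bot]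
  refine Filter.mem_of_superset
    (Filter.inter_mem (mem_nhdsWithin_of_mem_nhds (Metric.ball_mem_nhds x hε))
      self_mem_nhdsWithin) ?_
  rintro y ⟨hyball, hyne⟩ hyD
  exact absurd hyball (not_lt.2 (hsep y hyD x hx hyne))

/-- Existence of maximal `ε`-separated subsets. -/
lemma exists_maximal_separated {X : Type*} [MetricSpace X] (A : Set X) {ε : ℝ} (hε : 0 < ε) :
    ∃ D : Set X, D ⊆ A ∧ (∀ x ∈ D, ∀ y ∈ D, x ≠ y → ε ≤ dist x y) ∧
      ∀ a ∈ A, ∃ d ∈ D, dist a d < ε := by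
  obtain ⟨D, hD⟩ := zorn_subset
      {D : Set X | D ⊆ A ∧ ∀ x ∈ D, ∀ y ∈ D, x ≠ y → ε ≤ dist x y} (fun c hc hchain => by
    refine ⟨⋃₀ c, ⟨Set.sUnion_subset fun s hs => (hc hs).1, ?_⟩,
      fun s hs => Set.subset_sUnion_of_mem hs⟩
    rintro x ⟨s, hs, hxs⟩ y ⟨t, ht, hyt⟩ hxy
    rcases hchain.total hs ht with h | h
    · exact (hc ht).2 x (h hxs) y hyt hxy
    · exact (hc hs).2 x hxs y (h hyt) hxy)
  refine ⟨D, hD.prop.1, hD.prop.2, fun a ha => ?_⟩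
  by_contra h
  push_neg at h
  have haD : a ∉ D := fun haD => hε.not_ge (by simpa using h a haD)
  have hmem : insert a D ∈
      {D : Set X | D ⊆ A ∧ ∀ x ∈ D, ∀ y ∈ D, x ≠ y → ε ≤ dist x y} := by
    refine ⟨Set.insert_subset ha hD.prop.1, ?_⟩
    rintro x (rfl | hx) y (rfl | hy) hxy
    · exact absurd rfl hxy
    · exact h y hy
    · rw [dist_comm]; exact h x hx
    · exact hD.prop.2 x hx y hy hxy
  have := hD.eq_of_subset hmem (Set.subset_insert a D)
  exact haD (this ▸ Set.mem_insert a D)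

theorem discrete_subset_of_density_ge {X : Type*} [MetricSpace X]
    (κ : Cardinal) (hκ : Cardinal.aleph0 ≤ κ) (hcof : Cardinal.aleph0 < κ.ord.cof)
    (A : Set X)
    (hdens : ∀ D : Set X, D ⊆ A → A ⊆ closure D → κ ≤ #D) :
    ∃ D : Set X, D ⊆ A ∧ DiscreteTopology D ∧ κ ≤ #D := by
  have hpos : ∀ n : ℕ, (0:ℝ) < 1 / (n + 1) := fun n => by positivity
  choose D hDA hDsep hDmax using fun n : ℕ => exists_maximal_separated A (hpos n)
  -- the union is dense in A
  have hdense : A ⊆ closure (⋃ n, D n) := by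
    intro a ha
    rw [Metric.mem_closure_iff]
    intro ε hε
    obtain ⟨n, hn⟩ := exists_nat_one_div_lt hε
    obtain ⟨d, hd, hdist⟩ := hDmax n a ha
    exact ⟨d, Set.mem_iUnion.2 ⟨n, hd⟩, hdist.trans hn⟩
  have hκle : κ ≤ #(⋃ n, D n) := hdens _ (Set.iUnion_subset hDA) hdense
  have hκalt : ℵ₀ < κ := lt_of_lt_of_le hcof (Ordinal.cof_ord_le κ)
  by_contra hcon
  push_neg at hcon
  have hlt : ∀ n : ℕ, #(D n) < κ := fun n =>
    hcon (D n) (hDA n) (discrete_of_separated (hpos n) (hDsep n))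
  have hsup : (⨆ n : ℕ, #(D n)) < κ := by
    apply Ordinal.iSup_lt_lift _ hlt
    rwa [Cardinal.mk_nat, Cardinal.lift_aleph0]
  have hlast : #(⋃ n, D n) < κ := by
    have h1 := Cardinal.mk_iUnion_le_lift (fun n : ℕ => D n)
    simp only [Cardinal.lift_uzero, Cardinal.mk_nat, Cardinal.lift_aleph0] at h1
    exact h1.trans_lt (Cardinal.mul_lt_of_lt hκalt.le hκalt hsup)
  exact absurd hκle (not_le.2 hlast)
end

section
/- Let X be a metric space and let A be a connected subset of the hyperspace Fin(X) (Vietoris topology). If F ∈ A and C is a subset of ⋃A that is both open and closed in ⋃A with F ∩ C = ∅, and some member of A meets C, then a contradiction follows; consequently, if ⋃A is compact and locally connected with finitely many components, every F ∈ A meets every connected component of ⋃A. -/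
open TopologicalSpace

/-- The hyperspace of non-empty finite subsets of `X`, as a subspace of the
space of non-empty compact subsets with the Hausdorff metric (whose topology
coincides with the Vietoris topology). -/
def FinHyp (X : Type*) [MetricSpace X] : Type _ :=
  {s : NonemptyCompacts X // (s : Set X).Finite}

noncomputable instance (X : Type*) [MetricSpace X] : MetricSpace (FinHyp X) :=
  Subtype.metricSpace

theorem connected_family_meets_components {X : Type*} [MetricSpace X] :
    (∀ 𝒜 : Set (FinHyp X), IsConnected 𝒜 →
      ∀ F ∈ 𝒜, ∀ C ⊆ ⋃ A ∈ 𝒜, (A.1 : Set X),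
        IsClopen ((Subtype.val ⁻¹' C : Set ↥(⋃ A ∈ 𝒜, (A.1 : Set X)))) →
        (F.1 : Set X) ∩ C = ∅ →
        (∃ G ∈ 𝒜, ((G.1 : Set X) ∩ C).Nonempty) → False) ∧
    (∀ 𝒜 : Set (FinHyp X), IsConnected 𝒜 →
      IsCompact (⋃ A ∈ 𝒜, (A.1 : Set X)) →
      LocallyConnectedSpace ↥(⋃ A ∈ 𝒜, (A.1 : Set X)) →
      {S : Set X | ∃ x ∈ ⋃ A ∈ 𝒜, (A.1 : Set X),
        S = connectedComponentIn (⋃ A ∈ 𝒜, (A.1 : Set X)) x}.Finite →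
      ∀ F ∈ 𝒜, ∀ x ∈ ⋃ A ∈ 𝒜, (A.1 : Set X),
        ((F.1 : Set X) ∩ connectedComponentIn (⋃ A ∈ 𝒜, (A.1 : Set X)) x).Nonempty) := by
  have main : ∀ 𝒜 : Set (FinHyp X), IsConnected 𝒜 →
      ∀ F ∈ 𝒜, ∀ C ⊆ ⋃ A ∈ 𝒜, (A.1 : Set X),
        IsClopen ((Subtype.val ⁻¹' C : Set ↥(⋃ A ∈ 𝒜, (A.1 : Set X)))) →
        (F.1 : Set X) ∩ C = ∅ →
        (∃ G ∈ 𝒜, ((G.1 : Set X) ∩ C).Nonempty) → False := by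
    intro 𝒜 h𝒜 F hF𝒜 C hCY hclopen hFC hG
    obtain ⟨G, hG𝒜, hGC⟩ := hG
    set Y := ⋃ A ∈ 𝒜, (A.1 : Set X) with hYdef
    -- extract open sets of X representing C and its complement within Y
    obtain ⟨U, hUopen, hU⟩ := isOpen_induced_iff.mp hclopen.isOpen
    have hVo : IsOpen ((Subtype.val ⁻¹' Cᶜ) : Set ↥Y) := by
      rw [Set.preimage_compl]
      exact hclopen.isClosed.isOpen_compl
    obtain ⟨V, hVopen, hV⟩ := isOpen_induced_iff.mp hVo
    have hmemU : ∀ y (hy : y ∈ Y), (y ∈ U ↔ y ∈ C) := fun y hy => by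
      have := Set.ext_iff.mp hU ⟨y, hy⟩
      simpa using this
    have hmemV : ∀ y (hy : y ∈ Y), (y ∈ V ↔ y ∉ C) := fun y hy => by
      have := Set.ext_iff.mp hV ⟨y, hy⟩
      simpa using this
    haveI : ConnectedSpace ↥𝒜 := Subtype.connectedSpace h𝒜
    -- edist between members is finite
    have hfin : ∀ A B : FinHyp X, EMetric.hausdorffEdist (A.1 : Set X) (B.1 : Set X) ≠ ⊤ :=
      fun A B => Metric.hausdorffEdist_ne_top_of_nonempty_of_bounded A.1.nonempty B.1.nonempty
        A.1.isCompact.isBounded B.1.isCompact.isBounded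
    have hdist_eq : ∀ A B : FinHyp X,
        dist A B = Metric.hausdorffDist (A.1 : Set X) (B.1 : Set X) := fun A B => rfl
    set t : Set ↥𝒜 := {A | (((A : FinHyp X).1 : Set X) ∩ C).Nonempty} with htdef
    have htopen : IsOpen t := by
      rw [Metric.isOpen_iff]
      rintro ⟨A, hA⟩ ⟨a, haA, haC⟩
      have haY : a ∈ Y := Set.mem_biUnion hA haA
      have haU : a ∈ U := (hmemU a haY).mpr haC
      obtain ⟨ε, hε, hball⟩ := Metric.isOpen_iff.mp hUopen a haU
      refine ⟨ε, hε, ?_⟩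
      rintro ⟨B, hB⟩ hdB
      have hdB' : Metric.hausdorffDist ((A : FinHyp X).1 : Set X) ((B : FinHyp X).1 : Set X)
          < ε := by
        rw [← hdist_eq, dist_comm]
        exact hdB
      have h1 : Metric.infDist a ((B : FinHyp X).1 : Set X) < ε :=
        lt_of_le_of_lt (Metric.infDist_le_hausdorffDist_of_mem haA (hfin A B)) hdB'
      obtain ⟨b, hbB, hab⟩ := (Metric.infDist_lt_iff B.1.nonempty).mp h1
      have hbU : b ∈ U := hball (by rwa [Metric.mem_ball, dist_comm])
      have hbY : b ∈ Y := Set.mem_biUnion hB hbB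
      exact ⟨b, hbB, (hmemU b hbY).mp hbU⟩
    have htclosed : IsClosed t := by
      rw [← isOpen_compl_iff, Metric.isOpen_iff]
      rintro ⟨A, hA⟩ hAt
      have hAC : ((A.1 : Set X) ∩ C) = ∅ := by
        by_contra h
        exact hAt (Set.nonempty_iff_ne_empty.mpr h)
      have hAV : (A.1 : Set X) ⊆ V := by
        intro a haA
        have haY : a ∈ Y := Set.mem_biUnion hA haA
        refine (hmemV a haY).mpr fun haC => ?_
        exact absurd hAC (Set.nonempty_iff_ne_empty.mp ⟨a, haA, haC⟩)
      obtain ⟨δ, hδ, hthick⟩ := A.1.isCompact.exists_thickening_subset_open hVopen hAV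
      refine ⟨δ, hδ, ?_⟩
      rintro ⟨B, hB⟩ hdB
      rintro ⟨b, hbB, hbC⟩
      have hdB' : Metric.hausdorffDist ((B : FinHyp X).1 : Set X) ((A : FinHyp X).1 : Set X)
          < δ := by rw [← hdist_eq]; exact hdB
      have h1 : Metric.infDist b ((A : FinHyp X).1 : Set X) < δ :=
        lt_of_le_of_lt (Metric.infDist_le_hausdorffDist_of_mem hbB (hfin B A)) hdB'
      have hbth : b ∈ Metric.thickening δ ((A : FinHyp X).1 : Set X) :=
        (Metric.mem_thickening_iff_infDist_lt A.1.nonempty).mpr h1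
      have hbV : b ∈ V := hthick hbth
      have hbY : b ∈ Y := hCY hbC
      exact (hmemV b hbY).mp hbV hbC
    rcases isClopen_iff.mp ⟨htclosed, htopen⟩ with h | h
    · exact absurd h (Set.nonempty_iff_ne_empty.mp ⟨⟨G, hG𝒜⟩, hGC⟩)
    · have : (⟨F, hF𝒜⟩ : ↥𝒜) ∈ t := h ▸ Set.mem_univ _
      rw [htdef] at this
      exact absurd hFC (Set.nonempty_iff_ne_empty.mp this)
  refine ⟨main, ?_⟩
  intro 𝒜 h𝒜 _hcomp hloc _hfin F hF𝒜 x hx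
  haveI := hloc
  by_contra h
  rw [Set.not_nonempty_iff_eq_empty] at h
  refine main 𝒜 h𝒜 F hF𝒜 _ (connectedComponentIn_subset _ _) ?_ h ?_
  · rw [connectedComponentIn_eq_image hx,
      Set.preimage_image_eq _ Subtype.val_injective]
    exact ⟨isClosed_connectedComponent, isOpen_connectedComponent⟩
  · obtain ⟨A, hA𝒜, hxA⟩ := Set.mem_iUnion₂.mp hx
    exact ⟨A, hA𝒜, x, hxA, mem_connectedComponentIn hx⟩
end

section
/- Let X be a metric space, A ⊆ Fin(X) a connected subset of the hyperspace of non-empty finite subsets, and C an open and closed non-empty subset of ⋃A. Then the sets {F ∈ A : F ∩ C ≠ ∅} and {F ∈ A : F ⊆ ⋃A \ C} are disjoint open subsets of A whose union is A; hence by connectedness of A, either every F ∈ A meets C or every F ∈ A avoids C. -/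
open TopologicalSpace

theorem connected_family_dichotomy {X : Type*} [MetricSpace X]
    (𝒜 : Set (FinHyp X)) (hconn : IsConnected 𝒜)
    (C : Set X) (hCsub : C ⊆ ⋃ A ∈ 𝒜, (A.1 : Set X)) (hCne : C.Nonempty)
    (hclopen : IsClopen ((Subtype.val ⁻¹' C : Set ↥(⋃ A ∈ 𝒜, (A.1 : Set X))))) :
    Disjoint {F ∈ 𝒜 | ((F.1 : Set X) ∩ C).Nonempty}
      {F ∈ 𝒜 | (F.1 : Set X) ⊆ (⋃ A ∈ 𝒜, (A.1 : Set X)) \ C} ∧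
    IsOpen ((Subtype.val ⁻¹' {F ∈ 𝒜 | ((F.1 : Set X) ∩ C).Nonempty} : Set ↥𝒜)) ∧
    IsOpen ((Subtype.val ⁻¹' {F ∈ 𝒜 | (F.1 : Set X) ⊆ (⋃ A ∈ 𝒜, (A.1 : Set X)) \ C} :
      Set ↥𝒜)) ∧
    {F ∈ 𝒜 | ((F.1 : Set X) ∩ C).Nonempty} ∪
      {F ∈ 𝒜 | (F.1 : Set X) ⊆ (⋃ A ∈ 𝒜, (A.1 : Set X)) \ C} = 𝒜 ∧
    ((∀ F ∈ 𝒜, ((F.1 : Set X) ∩ C).Nonempty) ∨ (∀ F ∈ 𝒜, (F.1 : Set X) ∩ C = ∅)) := by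
  classical
  set U : Set X := ⋃ A ∈ 𝒜, (A.1 : Set X) with hU
  have hFU : ∀ F ∈ 𝒜, (F.1 : Set X) ⊆ U := fun F hF x hx => Set.mem_biUnion hF hx
  -- relative openness of C in U
  have hCo : ∀ x ∈ C, ∃ ε > 0, ∀ y ∈ U, dist y x < ε → y ∈ C := by
    intro x hx
    have hxU : x ∈ U := hCsub hx
    have h := hclopen.isOpen
    rw [Metric.isOpen_iff] at h
    obtain ⟨ε, hε, hball⟩ := h ⟨x, hxU⟩ hx
    refine ⟨ε, hε, fun y hyU hdy => ?_⟩
    exact hball (show (⟨y, hyU⟩ : ↥U) ∈ Metric.ball (⟨x, hxU⟩ : ↥U) ε by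
      simpa [Metric.mem_ball, Subtype.dist_eq] using hdy)
  -- relative closedness of C in U
  have hCc : ∀ x ∈ U, x ∉ C → ∃ ε > 0, ∀ y ∈ U, dist y x < ε → y ∉ C := by
    intro x hxU hxC
    have h : IsOpen ((Subtype.val ⁻¹' C : Set ↥U)ᶜ) := hclopen.isClosed.isOpen_compl
    rw [Metric.isOpen_iff] at h
    obtain ⟨ε, hε, hball⟩ := h ⟨x, hxU⟩ hxC
    refine ⟨ε, hε, fun y hyU hdy hyC => ?_⟩
    exact hball (show (⟨y, hyU⟩ : ↥U) ∈ Metric.ball (⟨x, hxU⟩ : ↥U) ε by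
      simpa [Metric.mem_ball, Subtype.dist_eq] using hdy) hyC
  have hedist : ∀ F G : FinHyp X,
      EMetric.hausdorffEdist (F.1 : Set X) (G.1 : Set X) ≠ ⊤ := fun F G =>
    Metric.hausdorffEdist_ne_top_of_nonempty_of_bounded F.1.nonempty G.1.nonempty
      F.1.isCompact.isBounded G.1.isCompact.isBounded
  have hdist : ∀ a b : ↥𝒜,
      dist a b = Metric.hausdorffDist (a.1.1 : Set X) (b.1.1 : Set X) := by
    intro a b
    rw [Subtype.dist_eq]
    rfl
  -- openness of the first set
  have hopen1 : IsOpen ((Subtype.val ⁻¹'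
      {F ∈ 𝒜 | ((F.1 : Set X) ∩ C).Nonempty} : Set ↥𝒜)) := by
    rw [Metric.isOpen_iff]
    rintro ⟨F, hF𝒜⟩ ⟨-, x, hxF, hxC⟩
    obtain ⟨ε, hε, hball⟩ := hCo x hxC
    refine ⟨ε, hε, ?_⟩
    rintro ⟨G, hG𝒜⟩ hGball
    have hd : Metric.hausdorffDist (F.1 : Set X) (G.1 : Set X) < ε := by
      rw [Metric.hausdorffDist_comm]
      have := hdist ⟨G, hG𝒜⟩ ⟨F, hF𝒜⟩
      simpa [Metric.mem_ball, this] using hGball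
    obtain ⟨y, hyG, hdy⟩ :=
      Metric.exists_dist_lt_of_hausdorffDist_lt hxF hd (hedist F G)
    refine ⟨hG𝒜, y, hyG, hball y (hFU G hG𝒜 hyG) ?_⟩
    rwa [dist_comm]
  -- openness of the second set
  have hopen2 : IsOpen ((Subtype.val ⁻¹'
      {F ∈ 𝒜 | (F.1 : Set X) ⊆ U \ C} : Set ↥𝒜)) := by
    rw [Metric.isOpen_iff]
    rintro ⟨F, hF𝒜⟩ ⟨-, hFsub⟩
    have key : ∀ x ∈ (F.1 : Set X), ∃ ε > 0, ∀ y ∈ U, dist y x < ε → y ∉ C :=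
      fun x hx => hCc x (hFsub hx).1 (hFsub hx).2
    choose! ε hεpos hεprop using key
    have hsne : F.2.toFinset.Nonempty := by
      rw [Set.Finite.toFinset_nonempty]
      exact F.1.nonempty
    set δ : ℝ := F.2.toFinset.inf' hsne ε with hδ
    have hδpos : 0 < δ := by
      rw [hδ, Finset.lt_inf'_iff]
      intro x hx
      exact hεpos x (F.2.mem_toFinset.mp hx)
    refine ⟨δ, hδpos, ?_⟩
    rintro ⟨G, hG𝒜⟩ hGball
    have hd : Metric.hausdorffDist (G.1 : Set X) (F.1 : Set X) < δ := by
      have := hdist ⟨G, hG𝒜⟩ ⟨F, hF𝒜⟩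
      simpa [Metric.mem_ball, this] using hGball
    refine ⟨hG𝒜, fun y hyG => ?_⟩
    obtain ⟨x, hxF, hdy⟩ :=
      Metric.exists_dist_lt_of_hausdorffDist_lt hyG hd (hedist G F)
    have hδle : δ ≤ ε x := Finset.inf'_le ε (F.2.mem_toFinset.mpr hxF)
    exact ⟨hFU G hG𝒜 hyG, hεprop x hxF y (hFU G hG𝒜 hyG) (lt_of_lt_of_le hdy hδle)⟩
  -- disjointness
  have hdisj : Disjoint {F ∈ 𝒜 | ((F.1 : Set X) ∩ C).Nonempty}
      {F ∈ 𝒜 | (F.1 : Set X) ⊆ U \ C} := by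
    rw [Set.disjoint_left]
    rintro F ⟨-, x, hxF, hxC⟩ ⟨-, hFsub⟩
    exact (hFsub hxF).2 hxC
  -- union
  have hunion : {F ∈ 𝒜 | ((F.1 : Set X) ∩ C).Nonempty} ∪
      {F ∈ 𝒜 | (F.1 : Set X) ⊆ U \ C} = 𝒜 := by
    apply Set.Subset.antisymm
    · rintro F (⟨hF, -⟩ | ⟨hF, -⟩) <;> exact hF
    · intro F hF
      by_cases h : ((F.1 : Set X) ∩ C).Nonempty
      · exact Or.inl ⟨hF, h⟩
      · refine Or.inr ⟨hF, fun x hx => ⟨hFU F hF hx, fun hxC => h ⟨x, hx, hxC⟩⟩⟩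
  -- dichotomy via connectedness
  refine ⟨hdisj, hopen1, hopen2, hunion, Or.inl ?_⟩
  haveI : PreconnectedSpace ↥𝒜 := Subtype.preconnectedSpace hconn.isPreconnected
  set P1 : Set ↥𝒜 := Subtype.val ⁻¹' {F ∈ 𝒜 | ((F.1 : Set X) ∩ C).Nonempty} with hP1
  have hcompl : P1ᶜ = Subtype.val ⁻¹' {F ∈ 𝒜 | (F.1 : Set X) ⊆ U \ C} := by
    ext ⟨F, hF⟩
    constructor
    · intro h
      have hnot : ¬ ((F.1 : Set X) ∩ C).Nonempty := fun hne => h ⟨hF, hne⟩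
      exact ⟨hF, fun x hx => ⟨hFU F hF hx, fun hxC => hnot ⟨x, hx, hxC⟩⟩⟩
    · rintro ⟨-, hsub⟩ ⟨-, x, hxF, hxC⟩
      exact (hsub hxF).2 hxC
  have hclopen1 : IsClopen P1 := by
    refine ⟨?_, hopen1⟩
    rw [← isOpen_compl_iff, hcompl]
    exact hopen2
  rcases (isClopen_iff.mp hclopen1) with hemp | huniv
  · -- P1 empty contradicts C nonempty
    exfalso
    obtain ⟨x, hxC⟩ := hCne
    obtain ⟨F, hF, hxF⟩ := Set.mem_iUnion₂.mp (hCsub hxC)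
    have : (⟨F, hF⟩ : ↥𝒜) ∈ P1 := ⟨hF, x, hxF, hxC⟩
    rw [hemp] at this
    exact this
  · intro F hF
    have : (⟨F, hF⟩ : ↥𝒜) ∈ P1 := huniv ▸ Set.mem_univ _
    exact this.2
end

section
/- Let (X,d) be a metric space that is locally path-connected, and let α : Fin(X) → (0,∞) be continuous. Then there exists a continuous map β : Fin(X) → (0,∞) such that for every non-empty finite set A ⊆ X and every point x with d(x,A) ≤ β(A), there is a path γ : [0,1] → X from some point of A to x with diam_d(γ([0,1])) < α(A). -/
open TopologicalSpace

/-!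
Near a given `A`, local path-connectedness at the finitely many points of `A` and continuity of
`α` give a single positive radius that works for every `B` close to `A`. The radii that work at a
point form an interval, so a partition of unity on the (paracompact) hyperspace glues these
locally constant choices into a continuous positive radius.
-/

open Metric Filter Topology

theorem exists_continuous_pos_of_eventually_forall {Y : Type*} [TopologicalSpace Y]
    [NormalSpace Y] [ParacompactSpace Y] (P : Y → ℝ → Prop)
    (hP : ∀ y ⦃δ δ'⦄, δ ≤ δ' → P y δ' → P y δ) (hloc : ∀ y, ∃ δ > 0, ∀ᶠ z in 𝓝 y, P z δ) :
    ∃ β : C(Y, ℝ), ∀ y, 0 < β y ∧ P y (β y) := by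
  have hconvex : ∀ y, Convex ℝ {δ | 0 < δ ∧ P y δ} := fun y =>
    Set.OrdConnected.convex ⟨fun δ₁ h₁ _ h₂ _ hδ => ⟨h₁.1.trans_le hδ.1, hP y hδ.2 h₂.2⟩⟩
  refine exists_continuous_forall_mem_convex_of_local_const hconvex fun y => ?_
  obtain ⟨δ, hδ, hev⟩ := hloc y
  exact ⟨δ, hev.mono fun z hz => ⟨hδ, hz⟩⟩

section LocallyPathConnected

variable {X : Type*} [MetricSpace X] [LocallyPathConnectedSpace X]

theorem eventually_forall_mem_ball_exists_path_diam_lt (p : X) {ε : ℝ} (hε : 0 < ε) :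
    ∀ᶠ d in 𝓝[>] (0 : ℝ), ∀ x ∈ ball p d, ∀ y ∈ ball p d,
      ∃ γ : Path x y, diam (Set.range γ) < ε := by
  obtain ⟨U, ⟨hU, hUpc⟩, hUball⟩ :=
    (path_connected_basis p).mem_iff.mp (ball_mem_nhds p (by positivity : 0 < ε / 4))
  obtain ⟨d₀, hd₀, hballU⟩ := Metric.mem_nhds_iff.mp hU
  filter_upwards [Ioo_mem_nhdsGT hd₀] with d hd x hx y hy
  obtain ⟨γ, hγU⟩ := hUpc.joinedIn x (hballU (ball_subset_ball hd.2.le hx))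
    y (hballU (ball_subset_ball hd.2.le hy))
  refine ⟨γ, ?_⟩
  calc diam (Set.range γ) ≤ diam (ball p (ε / 4)) :=
        diam_mono (Set.range_subset_iff.mpr fun t => hUball (hγU t)) isBounded_ball
    _ ≤ 2 * (ε / 4) := diam_ball (by positivity)
    _ < ε := by linarith

theorem Set.Finite.exists_pos_forall_mem_ball_exists_path_diam_lt {s : Set X} (hs : s.Finite)
    {ε : ℝ} (hε : 0 < ε) :
    ∃ d > 0, ∀ p ∈ s, ∀ x ∈ ball p d, ∀ y ∈ ball p d,
      ∃ γ : Path x y, diam (Set.range γ) < ε := by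
  have hev := (eventually_all_finite hs).mpr fun p _ =>
    eventually_forall_mem_ball_exists_path_diam_lt p hε
  obtain ⟨d, hd, hd₀⟩ := (hev.and self_mem_nhdsWithin).exists
  exact ⟨d, hd₀, hd⟩

end LocallyPathConnected

namespace FinHyp

variable {X : Type*} [MetricSpace X]

theorem exists_dist_lt_of_dist_lt {A B : FinHyp X} {r : ℝ} (hAB : dist A B < r) {b : X}
    (hb : b ∈ (B.1 : Set X)) : ∃ a ∈ (A.1 : Set X), dist b a < r := by
  have hfin : hausdorffEDist (B.1 : Set X) (A.1 : Set X) ≠ ⊤ :=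
    hausdorffEDist_ne_top_of_nonempty_of_bounded B.1.nonempty A.1.nonempty
      B.1.isCompact.isBounded A.1.isCompact.isBounded
  refine exists_dist_lt_of_hausdorffDist_lt hb ?_ hfin
  rwa [hausdorffDist_comm, ← NonemptyCompacts.dist_eq]

def IsPathRadius (α : FinHyp X → ℝ) (A : FinHyp X) (δ : ℝ) : Prop :=
  ∀ x : X, infDist x (A.1 : Set X) ≤ δ →
    ∃ a ∈ (A.1 : Set X), ∃ γ : Path a x, diam (Set.range γ) < α A

theorem IsPathRadius.mono {α : FinHyp X → ℝ} (A : FinHyp X) ⦃δ δ' : ℝ⦄ (h : δ ≤ δ')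
    (hδ' : IsPathRadius α A δ') : IsPathRadius α A δ :=
  fun x hx => hδ' x (hx.trans h)

theorem exists_pos_eventually_isPathRadius [LocallyPathConnectedSpace X] {α : FinHyp X → ℝ}
    (hα : Continuous α) (hpos : ∀ A, 0 < α A) (A : FinHyp X) :
    ∃ δ > 0, ∀ᶠ B in 𝓝 A, IsPathRadius α B δ := by
  obtain ⟨d, hd, hpath⟩ :=
    A.2.exists_pos_forall_mem_ball_exists_path_diam_lt (half_pos (hpos A))
  have hαB : ∀ᶠ B in 𝓝 A, α A / 2 < α B :=
    hα.continuousAt.eventually (lt_mem_nhds (half_lt_self (hpos A)))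
  refine ⟨d / 2, half_pos hd, ?_⟩
  filter_upwards [hαB, ball_mem_nhds A (half_pos hd)] with B hαB hAB x hx
  obtain ⟨b, hbB, hxb⟩ := B.1.isCompact.exists_infDist_eq_dist B.1.nonempty x
  obtain ⟨a, haA, hba⟩ := exists_dist_lt_of_dist_lt (mem_ball'.mp hAB) hbB
  have hxa : dist x a < d := by
    linarith [dist_triangle x b a, hxb ▸ hx]
  obtain ⟨γ, hγ⟩ := hpath a haA b (by rw [mem_ball]; linarith) x (mem_ball.mpr hxa)
  exact ⟨b, hbB, γ, hγ.trans hαB⟩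

end FinHyp

theorem exists_beta_for_paths {X : Type*} [MetricSpace X] [LocallyPathConnectedSpace X]
    (α : FinHyp X → ℝ) (hα : Continuous α) (hpos : ∀ A, 0 < α A) :
    ∃ β : FinHyp X → ℝ, Continuous β ∧ (∀ A, 0 < β A) ∧
      ∀ A : FinHyp X, ∀ x : X, Metric.infDist x (A.1 : Set X) ≤ β A →
        ∃ a ∈ (A.1 : Set X), ∃ γ : Path a x, Metric.diam (Set.range γ) < α A := by
  obtain ⟨β, hβ⟩ := exists_continuous_pos_of_eventually_forall (FinHyp.IsPathRadius α)
    FinHyp.IsPathRadius.mono (FinHyp.exists_pos_eventually_isPathRadius hα hpos)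
  exact ⟨β, β.continuous, fun A => (hβ A).1, fun A => (hβ A).2⟩
end
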